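/- arXiv:1304.2498 — 6 statements merged into one kernel-verified Lean document; each statement's English description precedes it below -/
import Mathlib

section
/- Let n ≥ 1, N = {0,1,...,n}, and let β : 2^N → ℝ be a submodular set function with β(∅) = 0 and β(N) = 0. Let P(β) = {x ∈ ℝ^N : Σ_{i∈S} x_i ≤ β(S) for all S ⊆ N, and Σ_{i∈N} x_i = 0}. If x is an extreme point of P(β), then there exists a chain of subsets ∅ = S_0 ⊂ S_1 ⊂ ⋯ ⊂ S_{n+1} = N with |S_k| = k for each k, such that Σ_{i∈S_k} x_i = β(S_k) for all 0 ≤ k ≤ n+1. -/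
open Finset Pointwise

/-- The `i`-th standard basis vector of `ℝ^N`. -/
noncomputable def std {m : ℕ} (i : Fin m) : Fin m → ℝ := fun k => if k = i then 1 else 0

/-- The 0/1 indicator vector of a subset `S ⊆ N`. -/
noncomputable def indic {m : ℕ} (S : Finset (Fin m)) : Fin m → ℝ := fun k => if k ∈ S then 1 else 0

/-- The standard inner product on `ℝ^N`. -/
noncomputable def ip {m : ℕ} (a b : Fin m → ℝ) : ℝ := ∑ k, a k * b k

/-- The cut set function of symmetric edge weights `b`: `β(S) = Σ_{i∈S, j∉S} b i j`. -/
noncomputable def cutFun {m : ℕ} (b : Fin m → Fin m → ℝ) (S : Finset (Fin m)) : ℝ :=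
  ∑ i ∈ S, ∑ j ∈ Sᶜ, b i j

/-- The base polytope of a set function `β`. -/
def basePoly {m : ℕ} (β : Finset (Fin m) → ℝ) : Set (Fin m → ℝ) :=
  {x | (∀ S : Finset (Fin m), ∑ i ∈ S, x i ≤ β S) ∧ ∑ i, x i = 0}

/-!
The sets on which `x ∈ P(β)` is tight form a lattice, by submodularity. If two coordinates
`i ≠ j` were not separated by any tight set, moving `x` a little along `± (e_i - e_j)` would
keep it in `P(β)`, so `x` would not be extreme. Hence above a tight set `S ≠ N`, a minimal
tight strict superset `T` has `|T \ S| = 1`: two points of `T \ S` would be separated by a tight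
set `A`, and then `(A ∪ S) ∩ T` would be a smaller one. Starting from `∅`, this gives the chain.
-/

theorem eq_zero_of_add_mem_of_sub_mem_of_mem_extremePoints {𝕜 E : Type*} [Field 𝕜]
    [LinearOrder 𝕜] [IsStrictOrderedRing 𝕜] [AddCommGroup E] [Module 𝕜 E] {A : Set E}
    {x v : E} (hx : x ∈ A.extremePoints 𝕜) (hadd : x + v ∈ A) (hsub : x - v ∈ A) : v = 0 := by
  have hmid : x ∈ openSegment 𝕜 (x + v) (x - v) :=
    ⟨1 / 2, 1 / 2, by norm_num, by norm_num, by norm_num, by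
      rw [smul_add, smul_sub, add_add_sub_cancel, ← add_smul]; norm_num⟩
  simpa using (mem_extremePoints.mp hx).2 _ hadd _ hsub hmid |>.1

theorem exists_pos_forall_pos_imp_le {ι : Type*} [Finite ι] (f : ι → ℝ) :
    ∃ ε > 0, ∀ i, 0 < f i → ε ≤ f i := by
  cases isEmpty_or_nonempty ι
  · exact ⟨1, one_pos, fun i => isEmptyElim i⟩
  let g : ι → ℝ := fun i => if 0 < f i then f i else 1
  have hg : ∀ i, 0 < g i := fun i => by dsimp only [g]; split_ifs <;> linarith
  obtain ⟨i₀, hi₀⟩ := Finite.exists_min g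
  exact ⟨g i₀, hg i₀, fun i hi => by simpa [g, hi] using hi₀ i⟩

section Tight

variable {α : Type*} [DecidableEq α] {β : Finset α → ℝ} {x : α → ℝ} {S T : Finset α}

def IsTight (β : Finset α → ℝ) (x : α → ℝ) (S : Finset α) : Prop :=
  ∑ i ∈ S, x i = β S

theorem IsTight.inter_and_union (hle : ∀ S, ∑ i ∈ S, x i ≤ β S)
    (hsub : ∀ S T, β (S ∩ T) + β (S ∪ T) ≤ β S + β T)
    (hS : IsTight β x S) (hT : IsTight β x T) :
    IsTight β x (S ∩ T) ∧ IsTight β x (S ∪ T) := by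
  have hmod : ∑ i ∈ S ∪ T, x i + ∑ i ∈ S ∩ T, x i = ∑ i ∈ S, x i + ∑ i ∈ T, x i :=
    sum_union_inter
  have := hle (S ∩ T)
  have := hle (S ∪ T)
  have := hsub S T
  unfold IsTight at *
  constructor <;> linarith

end Tight

section BasePolytope

variable {m : ℕ} {β : Finset (Fin m) → ℝ} {x : Fin m → ℝ}

theorem sum_std (A : Finset (Fin m)) (i : Fin m) : ∑ k ∈ A, std i k = indic A i := by
  simp [std, indic]

theorem sum_add_smul_std_sub_std (A : Finset (Fin m)) (t : ℝ) (i j : Fin m) :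
    ∑ k ∈ A, (x + t • (std i - std j)) k = ∑ k ∈ A, x k + t * (indic A i - indic A j) := by
  simp only [Pi.add_apply, Pi.smul_apply, Pi.sub_apply, smul_eq_mul, sum_add_distrib,
    ← mul_sum, sum_sub_distrib, sum_std]

theorem add_smul_std_sub_std_mem_basePoly (hx : x ∈ basePoly β) {i j : Fin m}
    (hij : ∀ A, IsTight β x A → (i ∈ A ↔ j ∈ A)) {ε : ℝ}
    (hε : ∀ A, ¬ IsTight β x A → ε ≤ β A - ∑ k ∈ A, x k) {t : ℝ} (ht : |t| ≤ ε) :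
    x + t • (std i - std j) ∈ basePoly β := by
  refine ⟨fun A => ?_, ?_⟩
  · rw [sum_add_smul_std_sub_std]
    by_cases hA : IsTight β x A
    · simp only [indic, hij A hA, sub_self, mul_zero, add_zero]
      exact hA.le
    · have hdiff : |indic A i - indic A j| ≤ 1 := by
        unfold indic; split_ifs <;> norm_num
      have hslack := hε A hA
      have hshift : t * (indic A i - indic A j) ≤ |t| := by
        calc _ ≤ |t * (indic A i - indic A j)| := le_abs_self _
          _ ≤ |t| := by rw [abs_mul]; exact mul_le_of_le_one_right (abs_nonneg t) hdiff
      linarith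
  · rw [sum_add_smul_std_sub_std]
    simp [indic, hx.2]

theorem exists_isTight_separating (hx : x ∈ (basePoly β).extremePoints ℝ) {i j : Fin m}
    (hij : i ≠ j) : ∃ A, IsTight β x A ∧ (i ∈ A ∧ j ∉ A ∨ j ∈ A ∧ i ∉ A) := by
  by_contra hnone
  have hsep : ∀ A, IsTight β x A → (i ∈ A ↔ j ∈ A) := fun A hA => by
    by_contra h; exact hnone ⟨A, hA, by tauto⟩
  obtain ⟨ε, hε, hslack⟩ := exists_pos_forall_pos_imp_le fun A => β A - ∑ k ∈ A, x k
  have hslack' : ∀ A, ¬ IsTight β x A → ε ≤ β A - ∑ k ∈ A, x k := fun A hA =>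
    hslack A (sub_pos.mpr ((hx.1.1 A).lt_of_ne hA))
  have hzero : ε • (std i - std j) = 0 := by
    refine eq_zero_of_add_mem_of_sub_mem_of_mem_extremePoints hx
      (add_smul_std_sub_std_mem_basePoly hx.1 hsep hslack' (abs_of_pos hε).le) ?_
    rw [sub_eq_add_neg, ← neg_smul]
    exact add_smul_std_sub_std_mem_basePoly hx.1 hsep hslack' (by rw [abs_neg, abs_of_pos hε])
  have := congrFun hzero i
  simp [std, hij, hε.ne'] at this

theorem exists_isTight_ssubset_card_succ
    (hsub : ∀ S T, β (S ∩ T) + β (S ∪ T) ≤ β S + β T) (hfull : β univ = 0)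
    (hx : x ∈ (basePoly β).extremePoints ℝ) {S : Finset (Fin m)} (hS : IsTight β x S)
    (hS_ne : S ≠ univ) : ∃ T, IsTight β x T ∧ S ⊂ T ∧ #T = #S + 1 := by
  classical
  have hle := hx.1.1
  let F := {T ∈ (univ : Finset (Finset (Fin m))) | IsTight β x T ∧ S ⊂ T}
  have huniv : univ ∈ F :=
    mem_filter.mpr ⟨mem_univ _, hx.1.2.trans hfull.symm, ssubset_univ_iff.mpr hS_ne⟩
  obtain ⟨T, hTF, hTmin⟩ := F.exists_min_image card ⟨_, huniv⟩
  obtain ⟨hT, hST⟩ := (mem_filter.mp hTF).2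
  refine ⟨T, hT, hST, ?_⟩
  by_contra hcard
  have hgap : ∀ a ∈ T \ S, ∀ b ∈ T \ S, ∀ A, IsTight β x A → a ∈ A → b ∉ A → False := by
    intro a ha b hb A hA haA hbA
    rw [mem_sdiff] at ha hb
    let B := (A ∪ S) ∩ T
    have hB : IsTight β x B :=
      (((hA.inter_and_union hle hsub hS).2).inter_and_union hle hsub hT).1
    have hSB : S ⊂ B := (ssubset_iff_of_subset (subset_inter subset_union_right hST.subset)).mpr
      ⟨a, by simp [haA, ha.1], ha.2⟩
    have hBT : B ⊂ T := (ssubset_iff_of_subset inter_subset_right).mpr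
      ⟨b, hb.1, by simp [hbA, hb.2]⟩
    have := hTmin B (by simpa [F] using ⟨hB, hSB⟩)
    exact (card_lt_card hBT).not_ge this
  have htwo : 1 < #(T \ S) := by
    rw [card_sdiff_of_subset hST.subset]; have := card_lt_card hST; omega
  obtain ⟨i, hi, j, hj, hij⟩ := one_lt_card.mp htwo
  obtain ⟨A, hA, ⟨hiA, hjA⟩ | ⟨hjA, hiA⟩⟩ := exists_isTight_separating hx hij
  exacts [hgap i hi j hj A hA hiA hjA, hgap j hj i hi A hA hjA hiA]

end BasePolytope

theorem Finset.exists_chain_of_exists_ssubset_card_succ {α : Type*} [Fintype α] [DecidableEq α]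
    (P : Finset α → Prop) (h₀ : P ∅)
    (hstep : ∀ S, P S → S ≠ univ → ∃ T, P T ∧ S ⊂ T ∧ #T = #S + 1) :
    ∃ c : ℕ → Finset α,
      c 0 = ∅ ∧ c (Fintype.card α) = univ ∧
      (∀ k ≤ Fintype.card α, #(c k) = k) ∧
      (∀ k < Fintype.card α, c k ⊂ c (k + 1)) ∧
      (∀ k ≤ Fintype.card α, P (c k)) := by
  choose! next hnext using hstep
  let c : ℕ → Finset α := fun k => next^[k] ∅
  have hsucc : ∀ k, c (k + 1) = next (c k) := fun k => Function.iterate_succ_apply' _ _ _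
  have hgood : ∀ k ≤ Fintype.card α, P (c k) ∧ #(c k) = k := by
    intro k
    induction k with
    | zero => exact fun _ => ⟨h₀, card_empty⟩
    | succ k ih =>
      intro hk
      obtain ⟨hP, hcard⟩ := ih (by omega)
      have hk_ne : c k ≠ univ := fun h => by rw [h, card_univ] at hcard; omega
      obtain ⟨hP', -, hcard'⟩ := hnext _ hP hk_ne
      exact ⟨hsucc k ▸ hP', by rw [hsucc, hcard', hcard]⟩
  have hne : ∀ k < Fintype.card α, c k ≠ univ := fun k hk h => by
    have := (hgood k hk.le).2; rw [h, card_univ] at this; omega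
  refine ⟨c, rfl, eq_univ_of_card _ (hgood _ le_rfl).2, fun k hk => (hgood k hk).2,
    fun k hk => ?_, fun k hk => (hgood k hk).1⟩
  rw [hsucc]
  exact (hnext _ (hgood k hk.le).1 (hne k hk)).2.1

theorem extremePoint_has_tight_chain_general (n : ℕ) (β : Finset (Fin (n + 1)) → ℝ)
    (hsub : ∀ S T : Finset (Fin (n + 1)), β (S ∩ T) + β (S ∪ T) ≤ β S + β T)
    (hempty : β ∅ = 0) (hfull : β Finset.univ = 0)
    (x : Fin (n + 1) → ℝ) (hx : x ∈ (basePoly β).extremePoints ℝ) :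
    ∃ c : ℕ → Finset (Fin (n + 1)),
      c 0 = ∅ ∧ c (n + 1) = Finset.univ ∧
      (∀ k ≤ n + 1, (c k).card = k) ∧
      (∀ k < n + 1, c k ⊂ c (k + 1)) ∧
      (∀ k ≤ n + 1, ∑ i ∈ c k, x i = β (c k)) := by
  have hchain := exists_chain_of_exists_ssubset_card_succ (IsTight β x)
    (by simp [IsTight, hempty]) fun S hS hS_ne =>
      exists_isTight_ssubset_card_succ hsub hfull hx hS hS_ne
  simpa only [Fintype.card_fin, IsTight] using hchain

/-- Every extreme point of the base polytope of a submodular function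
(vanishing on `∅` and `N`) admits a full chain of tight sets `∅ = S_0 ⊂ ⋯ ⊂ S_{n+1} = N`
with `|S_k| = k`. -/
theorem extremePoint_has_tight_chain (n : ℕ) (hn : 1 ≤ n) (β : Finset (Fin (n + 1)) → ℝ)
    (hsub : ∀ S T : Finset (Fin (n + 1)), β (S ∩ T) + β (S ∪ T) ≤ β S + β T)
    (hempty : β ∅ = 0) (hfull : β Finset.univ = 0)
    (x : Fin (n + 1) → ℝ) (hx : x ∈ (basePoly β).extremePoints ℝ) :
    ∃ c : ℕ → Finset (Fin (n + 1)),
      c 0 = ∅ ∧ c (n + 1) = Finset.univ ∧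
      (∀ k ≤ n + 1, (c k).card = k) ∧
      (∀ k < n + 1, c k ⊂ c (k + 1)) ∧
      (∀ k ≤ n + 1, ∑ i ∈ c k, x i = β (c k)) :=
  extremePoint_has_tight_chain_general n β hsub hempty hfull x hx
end

section
/- Let n ≥ 1, N = {0,1,...,n}, and let β : 2^N → ℝ be a submodular set function with β(∅) = 0 and β(N) = 0. Let P(β) = {x ∈ ℝ^N : Σ_{i∈S} x_i ≤ β(S) for all S ⊆ N, and Σ_{i∈N} x_i = 0}. Let ∅ = S_0 ⊂ S_1 ⊂ ⋯ ⊂ S_{n+1} = N be a chain of subsets with |S_k| = k for each k, and define x ∈ ℝ^N by x_i = β(S_k) − β(S_{k−1}) where k is the unique index with S_k ∖ S_{k−1} = {i}. Then x is an extreme point of P(β), and all sets S_k are tight at x, i.e. Σ_{i∈S_k} x_i = β(S_k). -/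
open Finset Pointwise

/-- Given a full chain `∅ = S_0 ⊂ ⋯ ⊂ S_{n+1} = N` with `|S_k| = k`, the
point `x` with `x_i = β(S_k) − β(S_{k−1})` for `S_k ∖ S_{k−1} = {i}` is an extreme point
of the base polytope, and all sets of the chain are tight at `x`. -/
theorem chain_gives_extremePoint (n : ℕ) (hn : 1 ≤ n) (β : Finset (Fin (n + 1)) → ℝ)
    (hsub : ∀ S T : Finset (Fin (n + 1)), β (S ∩ T) + β (S ∪ T) ≤ β S + β T)
    (hempty : β ∅ = 0) (hfull : β Finset.univ = 0)
    (c : ℕ → Finset (Fin (n + 1)))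
    (hc0 : c 0 = ∅) (hcN : c (n + 1) = Finset.univ)
    (hcard : ∀ k ≤ n + 1, (c k).card = k)
    (hchain : ∀ k < n + 1, c k ⊂ c (k + 1))
    (x : Fin (n + 1) → ℝ)
    (hx : ∀ k, 1 ≤ k → k ≤ n + 1 → ∀ i : Fin (n + 1),
      c k \ c (k - 1) = {i} → x i = β (c k) - β (c (k - 1))) :
    x ∈ (basePoly β).extremePoints ℝ ∧ ∀ k ≤ n + 1, ∑ i ∈ c k, x i = β (c k) := by
  -- Structure of one step of the chain
  have hstep : ∀ k < n + 1, ∃ i : Fin (n + 1),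
      c (k + 1) = insert i (c k) ∧ i ∉ c k ∧ x i = β (c (k + 1)) - β (c k) := by
    intro k hk
    have hss := (hchain k hk).subset
    have hcard1 : (c (k + 1) \ c k).card = 1 := by
      rw [card_sdiff_of_subset hss, hcard (k + 1) (by omega), hcard k (by omega)]; omega
    obtain ⟨i, hi⟩ := Finset.card_eq_one.mp hcard1
    have hmem : i ∈ c (k + 1) \ c k := hi ▸ Finset.mem_singleton_self i
    rw [Finset.mem_sdiff] at hmem
    have heq : c (k + 1) = insert i (c k) := by
      refine (Finset.eq_of_subset_of_card_le ?_ ?_).symm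
      · exact Finset.insert_subset hmem.1 hss
      · rw [Finset.card_insert_of_notMem hmem.2, hcard (k + 1) (by omega),
          hcard k (by omega)]
    have hxi : x i = β (c (k + 1)) - β (c k) := by
      have := hx (k + 1) (by omega) (by omega) i (by simpa using hi)
      simpa using this
    exact ⟨i, heq, hmem.2, hxi⟩
  -- Tightness
  have tight : ∀ k ≤ n + 1, ∑ i ∈ c k, x i = β (c k) := by
    intro k hk
    induction k with
    | zero => simp [hc0, hempty]
    | succ k ih =>
      obtain ⟨i, heq, hni, hxi⟩ := hstep k (by omega)
      rw [heq, Finset.sum_insert hni, hxi, ih (by omega), ← heq]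
      ring
  -- Membership: the greedy inequality
  have key : ∀ k ≤ n + 1, ∀ S : Finset (Fin (n + 1)),
      ∑ i ∈ S ∩ c k, x i ≤ β (S ∩ c k) := by
    intro k hk
    induction k with
    | zero => intro S; simp [hc0, hempty]
    | succ k ih =>
      intro S
      obtain ⟨i, heq, hni, hxi⟩ := hstep k (by omega)
      by_cases hiS : i ∈ S
      · have hA : S ∩ c (k + 1) = insert i (S ∩ c k) := by
          rw [heq, Finset.inter_insert_of_mem hiS]
        have hniSk : i ∉ S ∩ c k := fun h => hni (Finset.mem_of_mem_inter_right h)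
        have hsm := hsub (insert i (S ∩ c k)) (c k)
        have h1 : insert i (S ∩ c k) ∩ c k = S ∩ c k := by
          rw [Finset.insert_inter_of_notMem hni, Finset.inter_assoc,
            Finset.inter_self]
        have h2 : insert i (S ∩ c k) ∪ c k = c (k + 1) := by
          rw [Finset.insert_union, Finset.union_eq_right.mpr Finset.inter_subset_right,
            heq]
        rw [h1, h2] at hsm
        rw [hA, Finset.sum_insert hniSk, hxi]
        have := ih (by omega) S
        linarith
      · have hA : S ∩ c (k + 1) = S ∩ c k := by
          rw [heq, Finset.inter_insert_of_notMem hiS]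
        rw [hA]; exact ih (by omega) S
  have hmemineq : ∀ S : Finset (Fin (n + 1)), ∑ i ∈ S, x i ≤ β S := by
    intro S
    have := key (n + 1) le_rfl S
    simpa [hcN] using this
  have hsum0 : ∑ i, x i = 0 := by
    have := tight (n + 1) le_rfl
    rw [hcN] at this
    rw [this, hfull]
  have hxP : x ∈ basePoly β := ⟨hmemineq, hsum0⟩
  refine ⟨?_, tight⟩
  rw [mem_extremePoints]
  refine ⟨hxP, ?_⟩
  intro y hy z hz hseg
  obtain ⟨a, b, ha, hb, hab, hcomb⟩ := hseg
  -- pointwise combination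
  have hpt : ∀ i, a * y i + b * z i = x i := by
    intro i
    have := congrFun hcomb i
    simpa [smul_eq_mul] using this
  -- tightness for y and z on the chain
  have tyz : ∀ k ≤ n + 1, ∑ i ∈ c k, y i = β (c k) ∧ ∑ i ∈ c k, z i = β (c k) := by
    intro k hk
    have hyk := hy.1 (c k)
    have hzk := hz.1 (c k)
    have hcombk : a * (∑ i ∈ c k, y i) + b * (∑ i ∈ c k, z i) = β (c k) := by
      rw [Finset.mul_sum, Finset.mul_sum, ← Finset.sum_add_distrib]
      rw [← tight k hk]
      exact Finset.sum_congr rfl fun i _ => hpt i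
    have h0 : a * (β (c k) - ∑ i ∈ c k, y i) + b * (β (c k) - ∑ i ∈ c k, z i) = 0 := by
      linear_combination (β (c k)) * hab - hcombk
    have hy0 : 0 ≤ a * (β (c k) - ∑ i ∈ c k, y i) :=
      mul_nonneg ha.le (sub_nonneg.2 hyk)
    have hz0 : 0 ≤ b * (β (c k) - ∑ i ∈ c k, z i) :=
      mul_nonneg hb.le (sub_nonneg.2 hzk)
    have hy1 : a * (β (c k) - ∑ i ∈ c k, y i) = 0 := by linarith
    have hz1 : b * (β (c k) - ∑ i ∈ c k, z i) = 0 := by linarith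
    constructor
    · rcases mul_eq_zero.mp hy1 with h | h
      · exact absurd h ha.ne'
      · linarith
    · rcases mul_eq_zero.mp hz1 with h | h
      · exact absurd h hb.ne'
      · linarith
  -- now y and z agree with x on every c k
  have agree : ∀ w : Fin (n + 1) → ℝ, (∀ k ≤ n + 1, ∑ i ∈ c k, w i = β (c k)) →
      ∀ k ≤ n + 1, ∀ i ∈ c k, w i = x i := by
    intro w hw k hk
    induction k with
    | zero => simp [hc0]
    | succ k ih =>
      intro i hi
      obtain ⟨j, heq, hnj, hxj⟩ := hstep k (by omega)
      rw [heq, Finset.mem_insert] at hi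
      rcases hi with rfl | hi
      · have h1 := hw (k + 1) hk
        have h2 := hw k (by omega)
        rw [heq, Finset.sum_insert hnj, ← heq] at h1
        rw [hxj]; linarith
      · exact ih (by omega) i hi
  have hyx : y = x := by
    funext i
    exact agree y (fun k hk => (tyz k hk).1) (n + 1) le_rfl i (by simp [hcN])
  have hzx : z = x := by
    funext i
    exact agree z (fun k hk => (tyz k hk).2) (n + 1) le_rfl i (by simp [hcN])
  exact ⟨hyx, hzx⟩
end

section
/- Let n ≥ 1, N = {0,1,...,n}, and let β₁, β₂ : 2^N → ℝ be submodular set functions with β₁(∅) = β₂(∅) = 0 and β₁(N) = β₂(N) = 0. Then the base polytope of their sum is the Minkowski sum of their base polytopes: P(β₁ + β₂) = P(β₁) + P(β₂), where P(β) = {x ∈ ℝ^N : Σ_{i∈S} x_i ≤ β(S) for all S ⊆ N, and Σ_{i∈N} x_i = 0} and the sum on the right is the Minkowski sum of sets. -/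
open Finset Pointwise

/-!
The inclusion `P(β₁) + P(β₂) ⊆ P(β₁ + β₂)` is immediate. Conversely, for `x ∈ P(β₁ + β₂)` the
set function `S ↦ β₂ S - x(S)` is submodular and `x(S) - β₂ S ≤ β₁ S`, so Frank's discrete
sandwich theorem gives a modular `x₁` with `x(S) - β₂ S ≤ x₁(S) ≤ β₁ S`; at `S = N` both bounds
vanish, hence `x₁ ∈ P(β₁)`, `x - x₁ ∈ P(β₂)`.

The sandwich theorem (`-f ≤ x ≤ g` for submodular `f, g` with `0 ≤ f + g`) goes by induction on
the ground set. Submodularity makes `-f (insert v S) - g S ≤ g (insert v T) + f T` for all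
`S, T`, so a value `c` of the new coordinate `v` fits between all of them; the remaining problem
is the same one for `min (f S) (f (insert v S) + c)` and `min (g S) (g (insert v S) - c)`,
which are again submodular.
-/

def SubmodularOn {α : Type*} [DecidableEq α] (U : Finset α) (f : Finset α → ℝ) : Prop :=
  ∀ ⦃S T⦄, S ⊆ U → T ⊆ U → f (S ∩ T) + f (S ∪ T) ≤ f S + f T

def minInsert {α : Type*} [DecidableEq α] (f : Finset α → ℝ) (v : α) (c : ℝ) (S : Finset α) :
    ℝ :=
  min (f S) (f (insert v S) - c)

namespace SubmodularOn

variable {α : Type*} [DecidableEq α] {U : Finset α} {v : α} {f g : Finset α → ℝ}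

theorem sub_sum (hf : SubmodularOn U f) (x : α → ℝ) :
    SubmodularOn U (fun S => f S - ∑ i ∈ S, x i) := by
  intro S T hS hT
  have := hf hS hT
  have := sum_union_inter (s₁ := S) (s₂ := T) (f := x)
  linarith

theorem submodularOn_minInsert (hf : SubmodularOn (insert v U) f) (hv : v ∉ U) (c : ℝ) :
    SubmodularOn U (minInsert f v c) := by
  intro S T hS hT
  have hvS : v ∉ S := fun h => hv (hS h)
  have hvT : v ∉ T := fun h => hv (hT h)
  have hS' := hS.trans (subset_insert v U)
  have hT' := hT.trans (subset_insert v U)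
  have h₀₀ := hf hS' hT'
  have h₀₁ := hf hS' (insert_subset_insert v hT)
  have h₁₀ := hf (insert_subset_insert v hS) hT'
  have h₁₁ := hf (insert_subset_insert v hS) (insert_subset_insert v hT)
  rw [inter_insert_of_notMem hvS, union_insert] at h₀₁
  rw [insert_inter_of_notMem hvT, insert_union] at h₁₀
  rw [← insert_inter_distrib, ← insert_union_distrib] at h₁₁
  have := min_le_left (f (S ∩ T)) (f (insert v (S ∩ T)) - c)
  have := min_le_right (f (S ∩ T)) (f (insert v (S ∩ T)) - c)
  have := min_le_left (f (S ∪ T)) (f (insert v (S ∪ T)) - c)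
  have := min_le_right (f (S ∪ T)) (f (insert v (S ∪ T)) - c)
  simp only [minInsert]
  rcases min_choice (f S) (f (insert v S) - c) with h | h <;>
    rcases min_choice (f T) (f (insert v T) - c) with h' | h' <;>
    rw [h, h'] <;> linarith

theorem exists_between_insert (hf : SubmodularOn (insert v U) f)
    (hg : SubmodularOn (insert v U) g) (hfg : ∀ S ⊆ insert v U, 0 ≤ f S + g S) (hv : v ∉ U) :
    ∃ c, ∀ S ⊆ U, -f (insert v S) - g S ≤ c ∧ c ≤ g (insert v S) + f S := by
  have cross : ∀ S ⊆ U, ∀ T ⊆ U, -f (insert v S) - g S ≤ g (insert v T) + f T := by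
    intro S hS T hT
    have hvS : v ∉ S := fun h => hv (hS h)
    have hvT : v ∉ T := fun h => hv (hT h)
    have hS' := hS.trans (subset_insert v U)
    have hT' := hT.trans (subset_insert v U)
    have hf' := hf (insert_subset_insert v hS) hT'
    rw [insert_inter_of_notMem hvT, insert_union] at hf'
    have hg' := hg hS' (insert_subset_insert v hT)
    rw [inter_insert_of_notMem hvS, union_insert] at hg'
    have := hfg (insert v (S ∪ T)) (insert_subset_insert v (union_subset hS hT))
    have := hfg (S ∩ T) (inter_subset_left.trans hS')
    linarith
  refine ⟨U.powerset.inf' ⟨∅, empty_mem_powerset U⟩ (fun T => g (insert v T) + f T),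
    fun S hS => ⟨le_inf' _ _ fun T hT => cross S hS T (mem_powerset.1 hT),
      inf'_le _ (mem_powerset.2 hS)⟩⟩

end SubmodularOn

theorem sum_update_mem_Icc_of_minInsert {α : Type*} [DecidableEq α] {U : Finset α} {v : α}
    {f g : Finset α → ℝ} {x : α → ℝ} {c : ℝ}
    (hx : ∀ S ⊆ U, ∑ i ∈ S, x i ∈ Set.Icc (-minInsert f v (-c) S) (minInsert g v c S)) :
    ∀ S ⊆ insert v U, ∑ i ∈ S, Function.update x v c i ∈ Set.Icc (-f S) (g S) := by
  simp only [minInsert, Set.mem_Icc] at hx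
  intro S hS
  by_cases hvS : v ∈ S
  · obtain ⟨hlo, hhi⟩ := hx (S.erase v) (subset_insert_iff.1 hS)
    have := min_le_right (f (S.erase v)) (f (insert v (S.erase v)) - -c)
    have := min_le_right (g (S.erase v)) (g (insert v (S.erase v)) - c)
    rw [insert_erase hvS] at *
    rw [sum_update_of_mem hvS, sdiff_singleton_eq_erase, Set.mem_Icc]
    constructor <;> linarith
  · obtain ⟨hlo, hhi⟩ := hx S ((subset_insert_iff_of_notMem hvS).1 hS)
    have := min_le_left (f S) (f (insert v S) - -c)
    have := min_le_left (g S) (g (insert v S) - c)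
    rw [sum_update_of_notMem hvS, Set.mem_Icc]
    constructor <;> linarith

theorem SubmodularOn.exists_forall_sum_mem_Icc {α : Type*} [DecidableEq α] {U : Finset α}
    {f g : Finset α → ℝ} (hf : SubmodularOn U f) (hg : SubmodularOn U g)
    (hfg : ∀ S ⊆ U, 0 ≤ f S + g S) (hf₀ : f ∅ = 0) (hg₀ : g ∅ = 0) :
    ∃ x : α → ℝ, ∀ S ⊆ U, ∑ i ∈ S, x i ∈ Set.Icc (-f S) (g S) := by
  induction U using Finset.induction_on generalizing f g with
  | empty => exact ⟨0, fun S hS => by simp [subset_empty.1 hS, hf₀, hg₀]⟩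
  | insert v U hv ih =>
    obtain ⟨c, hc⟩ := hf.exists_between_insert hg hfg hv
    have hsum : ∀ S ⊆ U, 0 ≤ minInsert f v (-c) S + minInsert g v c S := by
      intro S hS
      obtain ⟨hlo, hhi⟩ := hc S hS
      have := hfg S (hS.trans (subset_insert v U))
      have := hfg (insert v S) (insert_subset_insert v hS)
      simp only [minInsert]
      rcases min_choice (f S) (f (insert v S) - -c) with h | h <;>
        rcases min_choice (g S) (g (insert v S) - c) with h' | h' <;>
        rw [h, h'] <;> linarith
    have hf₀' : minInsert f v (-c) ∅ = 0 := by
      have := (hc ∅ (empty_subset U)).1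
      rw [minInsert, hf₀]
      exact min_eq_left (by linarith)
    have hg₀' : minInsert g v c ∅ = 0 := by
      have := (hc ∅ (empty_subset U)).2
      rw [minInsert, hg₀]
      exact min_eq_left (by linarith)
    obtain ⟨x, hx⟩ := ih (hf.submodularOn_minInsert hv (-c))
      (hg.submodularOn_minInsert hv c) hsum hf₀' hg₀'
    exact ⟨Function.update x v c, sum_update_mem_Icc_of_minInsert hx⟩

theorem basePoly_add_subset {m : ℕ} (β₁ β₂ : Finset (Fin m) → ℝ) :
    basePoly β₁ + basePoly β₂ ⊆ basePoly (fun S => β₁ S + β₂ S) := by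
  rintro _ ⟨x₁, ⟨h₁, h₁₀⟩, x₂, ⟨h₂, h₂₀⟩, rfl⟩
  refine ⟨fun S => ?_, ?_⟩
  · simpa only [Pi.add_apply, sum_add_distrib] using add_le_add (h₁ S) (h₂ S)
  · simp only [Pi.add_apply, sum_add_distrib, h₁₀, h₂₀, add_zero]

theorem basePoly_subset_add {m : ℕ} {β₁ β₂ : Finset (Fin m) → ℝ}
    (hsub₁ : SubmodularOn univ β₁) (hsub₂ : SubmodularOn univ β₂)
    (hempty₁ : β₁ ∅ = 0) (hempty₂ : β₂ ∅ = 0) (hfull₁ : β₁ univ = 0) (hfull₂ : β₂ univ = 0) :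
    basePoly (fun S => β₁ S + β₂ S) ⊆ basePoly β₁ + basePoly β₂ := by
  rintro x ⟨hx, hx₀⟩
  obtain ⟨x₁, hx₁⟩ := (hsub₂.sub_sum x).exists_forall_sum_mem_Icc hsub₁
    (fun S _ => by linarith [hx S]) (by simp [hempty₂]) hempty₁
  have hsum₁ : ∑ i, x₁ i = 0 := by
    obtain ⟨hlo, hhi⟩ := hx₁ univ subset_rfl
    rw [hfull₂, hx₀] at hlo
    rw [hfull₁] at hhi
    linarith
  refine ⟨x₁, ⟨fun S => (hx₁ S (subset_univ S)).2, hsum₁⟩, x - x₁, ⟨fun S => ?_, ?_⟩,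
    add_sub_cancel x₁ x⟩
  · simp only [Pi.sub_apply, sum_sub_distrib]
    linarith [(hx₁ S (subset_univ S)).1]
  · simp only [Pi.sub_apply, sum_sub_distrib, hx₀, hsum₁, sub_zero]

theorem basePoly_add_general (n : ℕ) (β₁ β₂ : Finset (Fin (n + 1)) → ℝ)
    (hsub₁ : ∀ S T : Finset (Fin (n + 1)), β₁ (S ∩ T) + β₁ (S ∪ T) ≤ β₁ S + β₁ T)
    (hsub₂ : ∀ S T : Finset (Fin (n + 1)), β₂ (S ∩ T) + β₂ (S ∪ T) ≤ β₂ S + β₂ T)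
    (hempty₁ : β₁ ∅ = 0) (hempty₂ : β₂ ∅ = 0)
    (hfull₁ : β₁ Finset.univ = 0) (hfull₂ : β₂ Finset.univ = 0) :
    basePoly (fun S => β₁ S + β₂ S) = basePoly β₁ + basePoly β₂ :=
  (basePoly_subset_add (fun S T _ _ => hsub₁ S T) (fun S T _ _ => hsub₂ S T)
    hempty₁ hempty₂ hfull₁ hfull₂).antisymm (basePoly_add_subset β₁ β₂)

/-- The base polytope of a sum of two submodular functions (vanishing on
`∅` and `N`) is the Minkowski sum of the two base polytopes. -/
theorem basePoly_add (n : ℕ) (hn : 1 ≤ n) (β₁ β₂ : Finset (Fin (n + 1)) → ℝ)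
    (hsub₁ : ∀ S T : Finset (Fin (n + 1)), β₁ (S ∩ T) + β₁ (S ∪ T) ≤ β₁ S + β₁ T)
    (hsub₂ : ∀ S T : Finset (Fin (n + 1)), β₂ (S ∩ T) + β₂ (S ∪ T) ≤ β₂ S + β₂ T)
    (hempty₁ : β₁ ∅ = 0) (hempty₂ : β₂ ∅ = 0)
    (hfull₁ : β₁ Finset.univ = 0) (hfull₂ : β₂ Finset.univ = 0) :
    basePoly (fun S => β₁ S + β₂ S) = basePoly β₁ + basePoly β₂ :=
  basePoly_add_general n β₁ β₂ hsub₁ hsub₂ hempty₁ hempty₂ hfull₁ hfull₂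
end

section
/- Let n ≥ 1, N = {0,1,...,n}, let b_{ij} = b_{ji} ≥ 0 be nonnegative weights on unordered pairs of distinct elements of N with cut function β(S) = Σ_{i∈S, j∈N∖S} b_{ij}, and let ≺ be a linear order on N. Define x ∈ ℝ^N by x_i = Σ_{j : i ≺ j} b_{ij} − Σ_{j : j ≺ i} b_{ij}. Then x is an extreme point of the base polytope P(β) = {y ∈ ℝ^N : Σ_{i∈S} y_i ≤ β(S) for all S ⊆ N, and Σ_{i∈N} y_i = 0}. -/
open Finset Pointwise

/-!
Write `x i = ∑ j, c i j` with the antisymmetric `c i j = ±b i j`, the sign given by `≺`.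
The terms with both ends in `S` cancel, so `∑_{i ∈ S} x i = ∑_{i ∈ S, j ∉ S} c i j ≤ β S`,
with equality when `S` is an initial segment of `≺`, where every such `c i j` equals `b i j`.
The equations of the initial segments `{i ≺ k}` and `{i ≺ k} ∪ {k}` pin down every coordinate, so
`x` is the only point of the polytope on the face they cut out, hence a vertex.
-/

section Antisymmetric

variable {α G : Type*} [AddCommGroup G] [IsAddTorsionFree G] {c : α → α → G}

theorem sum_sum_eq_zero_of_antisymm (hc : ∀ i j, c j i = -c i j) (S : Finset α) :
    ∑ i ∈ S, ∑ j ∈ S, c i j = 0 := by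
  refine self_eq_neg.1 ?_
  calc ∑ i ∈ S, ∑ j ∈ S, c i j = ∑ i ∈ S, ∑ j ∈ S, c j i := Finset.sum_comm
    _ = ∑ i ∈ S, ∑ j ∈ S, -c i j :=
      Finset.sum_congr rfl fun i _ => Finset.sum_congr rfl fun j _ => hc i j
    _ = -∑ i ∈ S, ∑ j ∈ S, c i j := by simp only [Finset.sum_neg_distrib]

theorem sum_sum_eq_sum_sum_compl_of_antisymm [Fintype α] [DecidableEq α]
    (hc : ∀ i j, c j i = -c i j) (S : Finset α) :
    ∑ i ∈ S, ∑ j, c i j = ∑ i ∈ S, ∑ j ∈ Sᶜ, c i j := by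
  simp only [← Finset.sum_add_sum_compl S (c _), Finset.sum_add_distrib,
    sum_sum_eq_zero_of_antisymm hc, zero_add]

end Antisymmetric

section ExtremePoint

variable {𝕜 : Type*} [Field 𝕜] [LinearOrder 𝕜] [IsStrictOrderedRing 𝕜]

theorem eq_of_mul_add_mul_eq_of_le {a t p q C : 𝕜} (ha : 0 < a) (ht : 0 ≤ t) (hat : a + t = 1)
    (hp : p ≤ C) (hq : q ≤ C) (h : a * p + t * q = C) : p = C := by
  have hC : a * C + t * C = C := by rw [← add_mul, hat, one_mul]
  have hap : a * p ≤ a * C := mul_le_mul_of_nonneg_left hp ha.le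
  have htq : t * q ≤ t * C := mul_le_mul_of_nonneg_left hq ht
  exact mul_left_cancel₀ ha.ne' (by linarith : a * p = a * C)

theorem mem_extremePoints_of_unique_of_tight {E ι : Type*} [AddCommGroup E] [Module 𝕜 E]
    {K : Set E} {φ : ι → E →ₗ[𝕜] 𝕜} {c : ι → 𝕜} (hK : ∀ y ∈ K, ∀ i, φ i y ≤ c i)
    {x : E} (hx : x ∈ K)
    (htight : ∀ i, φ i x = c i) (huniq : ∀ y, (∀ i, φ i y = c i) → y = x) :
    x ∈ K.extremePoints 𝕜 := by
  refine mem_extremePoints.2 ⟨hx, fun y hy z hz ⟨a, t, ha, ht, hat, hxyz⟩ => ?_⟩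
  have hcomb : ∀ i, a * φ i y + t * φ i z = c i := fun i => by
    simpa only [← hxyz, map_add, map_smul, smul_eq_mul] using htight i
  refine ⟨huniq y fun i => ?_, huniq z fun i => ?_⟩
  · exact eq_of_mul_add_mul_eq_of_le ha ht.le hat (hK y hy i) (hK z hz i) (hcomb i)
  · refine eq_of_mul_add_mul_eq_of_le ht ha.le (by linarith) (hK z hz i) (hK y hy i) ?_
    linarith [hcomb i]

end ExtremePoint

def IsInitialSegment {α : Type*} (r : α → α → Prop) (S : Finset α) : Prop :=
  ∀ i ∈ S, ∀ j ∉ S, r i j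

section InitialSegment

variable {α : Type*} [Fintype α] {r : α → α → Prop} [DecidableRel r]
  [IsStrictTotalOrder α r]

theorem isInitialSegment_filter (k : α) : IsInitialSegment r {i | r i k} := by
  intro i hi j hj
  simp only [Finset.mem_filter, Finset.mem_univ, true_and] at hi hj
  rcases trichotomous_of r j k with h | rfl | h
  · exact absurd h hj
  · exact hi
  · exact trans_of r hi h

theorem isInitialSegment_insert_filter [DecidableEq α] (k : α) :
    IsInitialSegment r (insert k ({i | r i k} : Finset α)) := by
  intro i hi j hj
  simp only [Finset.mem_insert, Finset.mem_filter, Finset.mem_univ, true_and, not_or] at hi hj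
  have hkj : r k j := (trichotomous_of r j k).resolve_left hj.2 |>.resolve_left hj.1
  rcases hi with rfl | hik
  · exact hkj
  · exact trans_of r hik hkj

theorem eq_of_sum_eq_of_isInitialSegment [DecidableEq α] {G : Type*} [AddCommGroup G]
    {w w' : α → G} (h : ∀ S, IsInitialSegment r S → ∑ i ∈ S, w i = ∑ i ∈ S, w' i) :
    w = w' := by
  funext k
  have hk : k ∉ ({i | r i k} : Finset α) := by simp [irrefl_of r k]
  have h₂ := h _ (isInitialSegment_insert_filter k)
  rw [Finset.sum_insert hk, Finset.sum_insert hk, h _ (isInitialSegment_filter k)] at h₂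
  exact add_right_cancel h₂

end InitialSegment

noncomputable def orientedWeight {α : Type*} (r : α → α → Prop) [DecidableRel r]
    (b : α → α → ℝ) (i j : α) : ℝ :=
  if r i j then b i j else if r j i then -b i j else 0

section OrientedWeight

variable {α : Type*} {r : α → α → Prop} [DecidableRel r] {b : α → α → ℝ}

theorem orientedWeight_of_rel {i j : α} (h : r i j) : orientedWeight r b i j = b i j :=
  if_pos h

theorem orientedWeight_le (hnn : ∀ i j, 0 ≤ b i j) (i j : α) :
    orientedWeight r b i j ≤ b i j := by
  unfold orientedWeight
  split_ifs <;> linarith [hnn i j]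

variable [Std.Asymm r]

theorem orientedWeight_antisymm (hsym : ∀ i j, b i j = b j i) (i j : α) :
    orientedWeight r b j i = -orientedWeight r b i j := by
  unfold orientedWeight
  by_cases hij : r i j
  · simp [hij, asymm hij, hsym i j]
  · by_cases hji : r j i <;> simp [hij, hji, hsym i j]

theorem sum_filter_sub_sum_filter_eq_sum_orientedWeight [Fintype α] (i : α) :
    (∑ j ∈ Finset.univ.filter (fun j => r i j), b i j)
      - (∑ j ∈ Finset.univ.filter (fun j => r j i), b i j) = ∑ j, orientedWeight r b i j := by
  rw [Finset.sum_filter, Finset.sum_filter, ← Finset.sum_sub_distrib]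
  refine Finset.sum_congr rfl fun j _ => ?_
  unfold orientedWeight
  by_cases hij : r i j
  · simp [hij, asymm hij]
  · by_cases hji : r j i <;> simp [hij, hji]

end OrientedWeight

section GreedyPoint

variable {m : ℕ} {r : Fin m → Fin m → Prop} [DecidableRel r] [Std.Asymm r]
  {b : Fin m → Fin m → ℝ}

theorem sum_orientedWeight_le_cutFun (hsym : ∀ i j, b i j = b j i) (hnn : ∀ i j, 0 ≤ b i j)
    (S : Finset (Fin m)) : ∑ i ∈ S, ∑ j, orientedWeight r b i j ≤ cutFun b S := by
  rw [sum_sum_eq_sum_sum_compl_of_antisymm (orientedWeight_antisymm hsym)]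
  exact Finset.sum_le_sum fun i _ => Finset.sum_le_sum fun j _ => orientedWeight_le hnn i j

theorem sum_orientedWeight_eq_cutFun (hsym : ∀ i j, b i j = b j i) {S : Finset (Fin m)}
    (hS : IsInitialSegment r S) : ∑ i ∈ S, ∑ j, orientedWeight r b i j = cutFun b S := by
  rw [sum_sum_eq_sum_sum_compl_of_antisymm (orientedWeight_antisymm hsym)]
  exact Finset.sum_congr rfl fun i hi => Finset.sum_congr rfl fun j hj =>
    orientedWeight_of_rel (hS i hi j (Finset.mem_compl.1 hj))

theorem orientedWeight_mem_basePoly (hsym : ∀ i j, b i j = b j i) (hnn : ∀ i j, 0 ≤ b i j) :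
    (fun i => ∑ j, orientedWeight r b i j) ∈ basePoly (cutFun b) := by
  refine ⟨sum_orientedWeight_le_cutFun hsym hnn, ?_⟩
  simpa [cutFun] using sum_orientedWeight_eq_cutFun (r := r) hsym (S := Finset.univ)
    (fun _ _ j hj => absurd (Finset.mem_univ j) hj)

end GreedyPoint

theorem greedy_vertex_general (n : ℕ) (b : Fin (n + 1) → Fin (n + 1) → ℝ)
    (hsym : ∀ i j, b i j = b j i) (hnn : ∀ i j, 0 ≤ b i j)
    (r : Fin (n + 1) → Fin (n + 1) → Prop) [DecidableRel r]
    (hr : IsStrictTotalOrder (Fin (n + 1)) r)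
    (x : Fin (n + 1) → ℝ)
    (hx : ∀ i, x i = (∑ j ∈ Finset.univ.filter (fun j => r i j), b i j)
                   - (∑ j ∈ Finset.univ.filter (fun j => r j i), b i j)) :
    x ∈ (basePoly (cutFun b)).extremePoints ℝ := by
  have := hr
  obtain rfl : x = fun i => ∑ j, orientedWeight r b i j :=
    funext fun i => (hx i).trans (sum_filter_sub_sum_filter_eq_sum_orientedWeight i)
  let φ (S : {S : Finset (Fin (n + 1)) // IsInitialSegment r S}) :
      (Fin (n + 1) → ℝ) →ₗ[ℝ] ℝ := ∑ i ∈ S.1, LinearMap.proj i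
  have hφ : ∀ S y, φ S y = ∑ i ∈ S.1, y i := fun S y => by simp [φ]
  refine mem_extremePoints_of_unique_of_tight (φ := φ) (c := fun S => cutFun b S.1)
    (fun y hy S => (hφ S y).trans_le (hy.1 S)) (orientedWeight_mem_basePoly hsym hnn)
    (fun S => (hφ S _).trans (sum_orientedWeight_eq_cutFun hsym S.2)) fun y hy => ?_
  refine eq_of_sum_eq_of_isInitialSegment (r := r) fun S hS => ?_
  rw [← hφ ⟨S, hS⟩, hy ⟨S, hS⟩, sum_orientedWeight_eq_cutFun hsym hS]

/-- For a linear order `≺` on `N`, the point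
`x_i = Σ_{j : i ≺ j} b_{ij} − Σ_{j : j ≺ i} b_{ij}` is an extreme point of the base
polytope of the cut function. -/
theorem greedy_vertex (n : ℕ) (hn : 1 ≤ n) (b : Fin (n + 1) → Fin (n + 1) → ℝ)
    (hsym : ∀ i j, b i j = b j i) (hnn : ∀ i j, 0 ≤ b i j)
    (r : Fin (n + 1) → Fin (n + 1) → Prop) [DecidableRel r]
    (hr : IsStrictTotalOrder (Fin (n + 1)) r)
    (x : Fin (n + 1) → ℝ)
    (hx : ∀ i, x i = (∑ j ∈ Finset.univ.filter (fun j => r i j), b i j)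
                   - (∑ j ∈ Finset.univ.filter (fun j => r j i), b i j)) :
    x ∈ (basePoly (cutFun b)).extremePoints ℝ :=
  greedy_vertex_general n b hsym hnn r hr x hx
end

section
/- Let n ≥ 1, N = {0,1,...,n}, let a > 0, and let β₀(S) = a·|S|·(n+1−|S|) be the cut function of the complete graph on N with all weights equal to a. Then the extreme points of the base polytope P(β₀) = {x ∈ ℝ^N : Σ_{i∈S} x_i ≤ β₀(S) for all S ⊆ N, and Σ_{i∈N} x_i = 0} are exactly the points x for which there is a bijection σ : N → {0,1,...,n} with x_i = a(n − 2σ(i)) for all i ∈ N; in particular P(β₀) is the permutohedron whose vertices are the (n+1)! permutations of the coordinate vector (na, (n−2)a, ..., (2−n)a, −na). -/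
open Finset Pointwise

noncomputable def gf (n : ℕ) (a : ℝ) (s : ℕ) : ℝ := a * s * ((n : ℝ) + 1 - s)

lemma sum_range_lin (n : ℕ) (a : ℝ) : ∀ k : ℕ,
    ∑ m ∈ Finset.range k, (a * ((n : ℝ) - 2 * m)) = gf n a k := by
  intro k
  induction k with
  | zero => simp [gf]
  | succ k ih =>
    rw [Finset.sum_range_succ, ih]
    unfold gf
    push_cast
    ring

lemma sum_nat_ge (T : Finset ℕ) : ∑ k ∈ Finset.range T.card, k ≤ ∑ i ∈ T, i := by
  induction T using Finset.strongInduction with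
  | _ T ih =>
    rcases T.eq_empty_or_nonempty with h | h
    · simp [h]
    · have hM : T.max' h ∈ T := T.max'_mem h
      have h1 : T.card ≤ T.max' h + 1 := by
        have hsub : T ⊆ Finset.range (T.max' h + 1) :=
          fun x hx => Finset.mem_range.2 (Nat.lt_succ_of_le (T.le_max' x hx))
        simpa using Finset.card_le_card hsub
      have h2 := ih (T.erase (T.max' h)) (Finset.erase_ssubset hM)
      have hcard : (T.erase (T.max' h)).card = T.card - 1 := Finset.card_erase_of_mem hM
      have h3 : ∑ i ∈ T, i = T.max' h + ∑ i ∈ T.erase (T.max' h), i :=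
        (Finset.add_sum_erase T id hM).symm
      obtain ⟨c, hc⟩ : ∃ c, T.card = c + 1 :=
        ⟨T.card - 1, (Nat.succ_pred_eq_of_pos (Finset.card_pos.2 h)).symm⟩
      rw [hc, Finset.sum_range_succ, h3]
      have h2' : ∑ k ∈ Finset.range c, k ≤ ∑ i ∈ T.erase (T.max' h), i := by
        rw [hcard, hc] at h2; simpa using h2
      omega

lemma chain_lemma {n : ℕ} {a : ℝ} (ha : 0 < a) (x : Fin (n+1) → ℝ)
    (hx : ∀ S : Finset (Fin (n+1)), ∑ i ∈ S, x i ≤ gf n a S.card)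
    {S T : Finset (Fin (n+1))} (hS : ∑ i ∈ S, x i = gf n a S.card)
    (hT : ∑ i ∈ T, x i = gf n a T.card) : S ⊆ T ∨ T ⊆ S := by
  have hsum : ∑ i ∈ S ∪ T, x i + ∑ i ∈ S ∩ T, x i = ∑ i ∈ S, x i + ∑ i ∈ T, x i :=
    Finset.sum_union_inter
  have hu := hx (S ∪ T); have hi := hx (S ∩ T)
  have hcard : ((S ∪ T).card : ℝ) + ((S ∩ T).card : ℝ) = (S.card : ℝ) + T.card := by
    exact_mod_cast congrArg (Nat.cast (R := ℝ)) (Finset.card_union_add_card_inter S T)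
  have hus : (S.card : ℝ) ≤ (S ∪ T).card := by
    exact_mod_cast Finset.card_le_card Finset.subset_union_left
  have hut : (T.card : ℝ) ≤ (S ∪ T).card := by
    exact_mod_cast Finset.card_le_card Finset.subset_union_right
  have hineq : a * (S.card : ℝ) * ((n : ℝ) + 1 - S.card) + a * (T.card : ℝ) * ((n : ℝ) + 1 - T.card)
      ≤ a * ((S ∪ T).card : ℝ) * ((n : ℝ) + 1 - ((S ∪ T).card : ℝ))
        + a * ((S ∩ T).card : ℝ) * ((n : ℝ) + 1 - ((S ∩ T).card : ℝ)) := by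
    unfold gf at *; linarith [hu, hi, hsum, hS, hT]
  have heq : 2 * (a * ((((S ∪ T).card : ℝ) - S.card) * (((S ∪ T).card : ℝ) - T.card)))
      = a * (S.card : ℝ) * ((n : ℝ) + 1 - S.card) + a * (T.card : ℝ) * ((n : ℝ) + 1 - T.card)
        - a * ((S ∪ T).card : ℝ) * ((n : ℝ) + 1 - ((S ∪ T).card : ℝ))
        - a * ((S ∩ T).card : ℝ) * ((n : ℝ) + 1 - ((S ∩ T).card : ℝ)) := by
    linear_combination (a * ((n : ℝ) + 1)
      - a * (((S ∩ T).card : ℝ) - ((S ∪ T).card : ℝ) + (S.card : ℝ) + (T.card : ℝ))) * hcard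
  have key0 : a * ((((S ∪ T).card : ℝ) - S.card) * (((S ∪ T).card : ℝ) - T.card)) ≤ 0 := by
    linarith [heq, hineq]
  have key : (((S ∪ T).card : ℝ) - S.card) * (((S ∪ T).card : ℝ) - T.card) = 0 := by
    by_contra hne
    have hpos : 0 < (((S ∪ T).card : ℝ) - S.card) * (((S ∪ T).card : ℝ) - T.card) :=
      lt_of_le_of_ne (mul_nonneg (by linarith) (by linarith)) (Ne.symm hne)
    nlinarith
  rcases mul_eq_zero.1 key with h | h
  · right
    have hc : (S ∪ T).card = S.card := by exact_mod_cast sub_eq_zero.1 h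
    have := Finset.eq_of_subset_of_card_le Finset.subset_union_left (le_of_eq hc)
    intro i hiT
    rw [this]; exact Finset.mem_union_right _ hiT
  · left
    have hc : (S ∪ T).card = T.card := by exact_mod_cast sub_eq_zero.1 h
    have := Finset.eq_of_subset_of_card_le Finset.subset_union_right (le_of_eq hc)
    intro i hiS
    rw [this]; exact Finset.mem_union_left _ hiS

lemma not_extreme_of_gap {n : ℕ} {a : ℝ} (x : Fin (n+1) → ℝ)
    (hx : ∀ S : Finset (Fin (n+1)), ∑ i ∈ S, x i ≤ gf n a S.card)
    (hx0 : ∑ i, x i = 0)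
    {i j : Fin (n+1)} (hij : i ≠ j)
    (hkey : ∀ S : Finset (Fin (n+1)), ∑ k ∈ S, x k = gf n a S.card → (i ∈ S ↔ j ∈ S)) :
    x ∉ (basePoly (fun S : Finset (Fin (n+1)) =>
      a * (S.card : ℝ) * ((n : ℝ) + 1 - (S.card : ℝ)))).extremePoints ℝ := by
  classical
  intro hext
  set d : Fin (n+1) → ℝ := fun k => (if k = i then (1:ℝ) else 0) - (if k = j then 1 else 0)
    with hd
  have hdS : ∀ S : Finset (Fin (n+1)), ∑ k ∈ S, d k
      = (if i ∈ S then (1:ℝ) else 0) - (if j ∈ S then 1 else 0) := by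
    intro S
    simp [hd, Finset.sum_sub_distrib, Finset.sum_ite_eq' S]
  have hslack : ∀ S : Finset (Fin (n+1)),
      0 < (if ∑ k ∈ S, x k = gf n a S.card then 1 else gf n a S.card - ∑ k ∈ S, x k) := by
    intro S
    split
    · exact one_pos
    · next h => exact sub_pos.2 (lt_of_le_of_ne (hx S) h)
  set ε : ℝ := Finset.univ.inf' ⟨∅, Finset.mem_univ _⟩
      (fun S : Finset (Fin (n+1)) =>
        if ∑ k ∈ S, x k = gf n a S.card then 1 else gf n a S.card - ∑ k ∈ S, x k) with hε
  have hεpos : 0 < ε := (Finset.lt_inf'_iff _).2 fun S _ => hslack S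
  have hmem : ∀ c : ℝ, |c| = ε → (fun k => x k + c * d k) ∈ basePoly
      (fun S : Finset (Fin (n+1)) => a * (S.card : ℝ) * ((n : ℝ) + 1 - (S.card : ℝ))) := by
    intro c hc
    constructor
    · intro S
      have hsplit : ∑ k ∈ S, (x k + c * d k) = ∑ k ∈ S, x k + c * ∑ k ∈ S, d k := by
        rw [Finset.sum_add_distrib, Finset.mul_sum]
      show ∑ k ∈ S, (x k + c * d k) ≤ a * (S.card : ℝ) * ((n : ℝ) + 1 - (S.card : ℝ))
      rw [hsplit]
      by_cases ht : ∑ k ∈ S, x k = gf n a S.card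
      · have hd0 : ∑ k ∈ S, d k = 0 := by
          rw [hdS]
          by_cases hiS : i ∈ S
          · rw [if_pos hiS, if_pos ((hkey S ht).1 hiS)]; ring
          · rw [if_neg hiS, if_neg (fun hjS => hiS ((hkey S ht).2 hjS))]; ring
        rw [hd0, mul_zero, add_zero]
        exact ht.le.trans_eq (by unfold gf; ring)
      · have hεle : ε ≤ gf n a S.card - ∑ k ∈ S, x k := by
          have h := Finset.inf'_le (b := S)
            (fun S : Finset (Fin (n+1)) =>
              if ∑ k ∈ S, x k = gf n a S.card then 1 else gf n a S.card - ∑ k ∈ S, x k)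
            (Finset.mem_univ S)
          rw [if_neg ht] at h
          exact hε ▸ h
        have hd1 : |∑ k ∈ S, d k| ≤ 1 := by
          rw [hdS]; split <;> split <;> norm_num
        have habs : |c * ∑ k ∈ S, d k| ≤ ε := by
          rw [abs_mul, hc]
          calc ε * |∑ k ∈ S, d k| ≤ ε * 1 := by
                exact mul_le_mul_of_nonneg_left hd1 hεpos.le
            _ = ε := mul_one ε
        have h2 : c * ∑ k ∈ S, d k ≤ ε := (abs_le.1 habs).2
        have : gf n a S.card = a * (S.card : ℝ) * ((n : ℝ) + 1 - (S.card : ℝ)) := rfl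
        linarith
    · have hdu : ∑ k, d k = 0 := by
        rw [hdS Finset.univ]
        simp
      show ∑ k, (x k + c * d k) = 0
      rw [Finset.sum_add_distrib, hx0, ← Finset.mul_sum, hdu]
      ring
  have hy := hmem ε (abs_of_pos hεpos)
  have hz := hmem (-ε) (by rw [abs_neg]; exact abs_of_pos hεpos)
  have hseg : x ∈ openSegment ℝ (fun k => x k + ε * d k) (fun k => x k + (-ε) * d k) := by
    refine ⟨1/2, 1/2, by norm_num, by norm_num, by norm_num, ?_⟩
    funext k
    simp only [Pi.add_apply, Pi.smul_apply, smul_eq_mul]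
    ring
  obtain ⟨hy', -⟩ := (mem_extremePoints.1 hext).2 _ hy _ hz hseg
  have := congrFun hy' i
  have hdi : d i = 1 := by simp [hd, hij]
  rw [hdi] at this
  simp at this
  exact absurd this (by positivity)

lemma flag_exists {n : ℕ} {a : ℝ} (ha : 0 < a) (x : Fin (n+1) → ℝ)
    (hx : ∀ S : Finset (Fin (n+1)), ∑ i ∈ S, x i ≤ gf n a S.card)
    (hx0 : ∑ i, x i = 0)
    (hext : x ∈ (basePoly (fun S : Finset (Fin (n+1)) =>
      a * (S.card : ℝ) * ((n : ℝ) + 1 - (S.card : ℝ)))).extremePoints ℝ) :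
    ∀ k : ℕ, k ≤ n + 1 →
      ∃ S : Finset (Fin (n+1)), S.card = k ∧ ∑ i ∈ S, x i = gf n a S.card := by
  classical
  have huniv : ∑ i ∈ (Finset.univ : Finset (Fin (n+1))), x i
      = gf n a (Finset.univ : Finset (Fin (n+1))).card := by
    rw [hx0]
    unfold gf
    simp
  intro k
  induction k with
  | zero =>
    intro _
    exact ⟨∅, Finset.card_empty, by simp [gf]⟩
  | succ k ih =>
    intro hk
    obtain ⟨S, hScard, hStight⟩ := ih (by omega)
    have hSneuniv : S.card < n + 1 := by omega
    set 𝒮 : Finset (Finset (Fin (n+1))) := Finset.univ.filter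
      (fun T => (∑ i ∈ T, x i = gf n a T.card) ∧ S ⊂ T) with h𝒮
    have hud : (Finset.univ : Finset (Fin (n+1))) ∈ 𝒮 := by
      rw [h𝒮, Finset.mem_filter]
      refine ⟨Finset.mem_univ _, huniv, ?_⟩
      rw [Finset.ssubset_univ_iff]
      intro h
      rw [h] at hScard
      simp [Finset.card_univ] at hScard
      omega
    obtain ⟨B, hB𝒮, hBmin⟩ := Finset.exists_min_image 𝒮 Finset.card ⟨_, hud⟩
    rw [h𝒮, Finset.mem_filter] at hB𝒮
    obtain ⟨-, hBtight, hSB⟩ := hB𝒮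
    have hcardlt : k < B.card := hScard ▸ Finset.card_lt_card hSB
    refine ⟨B, ?_, hBtight⟩
    by_contra hne
    have hge2 : 2 ≤ (B \ S).card := by
      rw [Finset.card_sdiff_of_subset hSB.subset, hScard]
      omega
    obtain ⟨i, hi, j, hj, hij⟩ := Finset.one_lt_card.1 (by omega : 1 < (B \ S).card)
    have hiS : i ∉ S := (Finset.mem_sdiff.1 hi).2
    have hjS : j ∉ S := (Finset.mem_sdiff.1 hj).2
    have hiB : i ∈ B := (Finset.mem_sdiff.1 hi).1
    have hjB : j ∈ B := (Finset.mem_sdiff.1 hj).1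
    refine not_extreme_of_gap x hx hx0 hij ?_ hext
    intro T hTtight
    rcases chain_lemma ha x hx hTtight hStight with hTS | hST
    · constructor
      · intro h; exact absurd (hTS h) hiS
      · intro h; exact absurd (hTS h) hjS
    · by_cases hTeqS : T = S
      · subst hTeqS
        exact ⟨fun h => absurd h hiS, fun h => absurd h hjS⟩
      · have hSTs : S ⊂ T := Finset.ssubset_iff_subset_ne.2 ⟨hST, Ne.symm hTeqS⟩
        have hT𝒮 : T ∈ 𝒮 := by
          rw [h𝒮, Finset.mem_filter]; exact ⟨Finset.mem_univ _, hTtight, hSTs⟩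
        have hcard : B.card ≤ T.card := hBmin T hT𝒮
        have hBT : B ⊆ T := by
          rcases chain_lemma ha x hx hTtight hBtight with hTB | hBT
          · rw [Finset.eq_of_subset_of_card_le hTB hcard]
          · exact hBT
        exact ⟨fun _ => hBT hjB, fun _ => hBT hiB⟩

/-- For `a > 0`, the extreme points of the base polytope of
`β₀(S) = a·|S|·(n+1−|S|)` are exactly the points obtained from a bijection
`σ : N → {0,…,n}` by `x_i = a(n − 2σ(i))`: the polytope is the permutohedron on the
coordinate vector `(na, (n−2)a, …, (2−n)a, −na)`. -/
theorem permutohedron_extremePoints (n : ℕ) (hn : 1 ≤ n) (a : ℝ) (ha : 0 < a) :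
    (basePoly (fun S : Finset (Fin (n + 1)) =>
        a * (S.card : ℝ) * ((n : ℝ) + 1 - (S.card : ℝ)))).extremePoints ℝ
      = {x : Fin (n + 1) → ℝ |
          ∃ σ : Equiv.Perm (Fin (n + 1)), ∀ i, x i = a * ((n : ℝ) - 2 * ((σ i : ℕ) : ℝ))} := by
  --MAIN

  classical
  ext x
  simp only [Set.mem_setOf_eq]
  constructor
  · intro hext
    obtain ⟨⟨hx, hx0⟩, -⟩ := mem_extremePoints.1 hext
    have hx' : ∀ S : Finset (Fin (n+1)), ∑ i ∈ S, x i ≤ gf n a S.card := hx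
    have hflag := flag_exists ha x hx' hx0 hext
    choose! Sf hcard htight using hflag
    have hmono : ∀ k l : ℕ, k ≤ l → l ≤ n + 1 → Sf k ⊆ Sf l := by
      intro k l hkl hl
      rcases eq_or_lt_of_le hkl with rfl | hlt
      · exact subset_rfl
      · rcases chain_lemma ha x hx' (htight k (by omega)) (htight l hl) with h | h
        · exact h
        · have hcc := Finset.card_le_card h
          rw [hcard k (by omega), hcard l hl] at hcc
          exact absurd hcc (by omega)
    have hdiff : ∀ k : ℕ, k ≤ n → ∃ e : Fin (n+1), Sf (k+1) \ Sf k = {e} := by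
      intro k hk
      rw [← Finset.card_eq_one, Finset.card_sdiff_of_subset (hmono k (k+1) (by omega) (by omega)),
        hcard (k+1) (by omega), hcard k (by omega)]
      omega
    choose! τ hτ using hdiff
    have hmemdiff : ∀ k : ℕ, k ≤ n → τ k ∈ Sf (k+1) ∧ τ k ∉ Sf k := by
      intro k hk
      have h : τ k ∈ Sf (k+1) \ Sf k := (hτ k hk) ▸ Finset.mem_singleton_self _
      exact ⟨(Finset.mem_sdiff.1 h).1, (Finset.mem_sdiff.1 h).2⟩
    have hval : ∀ k : ℕ, k ≤ n → x (τ k) = a * ((n : ℝ) - 2 * k) := by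
      intro k hk
      have hsd : ∑ i ∈ Sf (k+1) \ Sf k, x i + ∑ i ∈ Sf k, x i = ∑ i ∈ Sf (k+1), x i :=
        Finset.sum_sdiff (hmono k (k+1) (by omega) (by omega))
      rw [hτ k hk, Finset.sum_singleton] at hsd
      have h1 := htight k (by omega)
      have h2 := htight (k+1) (by omega)
      rw [hcard k (by omega)] at h1
      rw [hcard (k+1) (by omega)] at h2
      have hv : x (τ k) = gf n a (k+1) - gf n a k := by linarith
      rw [hv]
      unfold gf
      push_cast
      ring
    have hinj : Function.Injective (fun k : Fin (n+1) => τ (k : ℕ)) := by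
      have haux : ∀ k l : Fin (n+1), (k : ℕ) < (l : ℕ) → τ (k : ℕ) ≠ τ (l : ℕ) := by
        intro k l hlt heq
        have hkn : (k : ℕ) ≤ n := by have := k.isLt; omega
        have hln : (l : ℕ) ≤ n := by have := l.isLt; omega
        have h1 : τ (k : ℕ) ∈ Sf ((k : ℕ) + 1) := (hmemdiff _ hkn).1
        have h2 : τ (l : ℕ) ∉ Sf (l : ℕ) := (hmemdiff _ hln).2
        exact h2 (heq ▸ hmono ((k : ℕ) + 1) (l : ℕ) (by omega) (by omega) h1)
      intro k l heq
      by_contra hne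
      have hvne : (k : ℕ) ≠ (l : ℕ) := fun h => hne (Fin.ext h)
      rcases lt_or_gt_of_ne hvne with h | h
      · exact haux k l h heq
      · exact haux l k h heq.symm
    let e : Fin (n+1) ≃ Fin (n+1) :=
      Equiv.ofBijective _ (Finite.injective_iff_bijective.1 hinj)
    refine ⟨e.symm, fun i => ?_⟩
    have happ : τ ((e.symm i : Fin (n+1)) : ℕ) = i := e.apply_symm_apply i
    have hlt : ((e.symm i : Fin (n+1)) : ℕ) ≤ n := by
      have := (e.symm i).isLt; omega
    have hv := hval _ hlt
    rw [happ] at hv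
    exact hv
  · rintro ⟨σ, hσ⟩
    set f : Fin (n+1) → ℝ := fun j => a * ((n : ℝ) - 2 * ((j : ℕ) : ℝ)) with hf
    -- general feasibility bound for sums of f over any subset
    have hA : ∀ T : Finset (Fin (n+1)), ∑ j ∈ T, f j ≤ gf n a T.card := by
      intro T
      have hnat := sum_nat_ge (T.image Fin.val)
      rw [Finset.card_image_of_injective _ Fin.val_injective] at hnat
      have hsum : ∑ m ∈ T.image Fin.val, m = ∑ j ∈ T, (j : ℕ) :=
        Finset.sum_image (fun a _ b _ h => Fin.val_injective h)
      rw [hsum] at hnat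
      have h1 : ∑ m ∈ Finset.range T.card, (m : ℝ) ≤ ∑ j ∈ T, ((j : ℕ) : ℝ) := by
        have := (Nat.cast_le (α := ℝ)).2 hnat
        push_cast at this
        exact this
      have h2 : ∀ s : ℕ, ∀ U : Finset ℕ, ∑ m ∈ U, (a * ((n : ℝ) - 2 * m))
          = U.card * (a * (n : ℝ)) - 2 * a * ∑ m ∈ U, (m : ℝ) := by
        intro s U
        calc ∑ m ∈ U, (a * ((n : ℝ) - 2 * m))
            = ∑ m ∈ U, (a * (n : ℝ) - 2 * a * (m : ℝ)) :=
              Finset.sum_congr rfl (fun m _ => by ring)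
          _ = U.card * (a * (n : ℝ)) - 2 * a * ∑ m ∈ U, (m : ℝ) := by
              rw [Finset.sum_sub_distrib, Finset.sum_const, ← Finset.mul_sum, nsmul_eq_mul]
      have h3 : gf n a T.card = (T.card : ℝ) * (a * (n : ℝ))
          - 2 * a * ∑ m ∈ Finset.range T.card, (m : ℝ) := by
        rw [← sum_range_lin n a T.card, h2 T.card]
        simp
      have h4 : ∑ j ∈ T, f j = (T.card : ℝ) * (a * (n : ℝ)) - 2 * a * ∑ j ∈ T, ((j : ℕ) : ℝ) := by
        calc ∑ j ∈ T, f j = ∑ j ∈ T, (a * (n : ℝ) - 2 * a * ((j : ℕ) : ℝ)) :=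
              Finset.sum_congr rfl (fun j _ => by rw [hf]; ring)
          _ = _ := by
              rw [Finset.sum_sub_distrib, Finset.sum_const, ← Finset.mul_sum, nsmul_eq_mul]
      rw [h3, h4]
      nlinarith [mul_le_mul_of_nonneg_left h1 (by positivity : (0:ℝ) ≤ 2 * a)]
    have hxf : ∀ i, x i = f (σ i) := fun i => hσ i
    have hsum_img : ∀ S : Finset (Fin (n+1)), ∑ i ∈ S, x i = ∑ j ∈ S.image σ, f j := by
      intro S
      rw [Finset.sum_image (fun a _ b _ h => σ.injective h)]
      exact Finset.sum_congr rfl (fun i _ => hxf i)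
    have hfeas : ∀ S : Finset (Fin (n+1)), ∑ i ∈ S, x i ≤ gf n a S.card := by
      intro S
      rw [hsum_img S]
      have := hA (S.image σ)
      rwa [Finset.card_image_of_injective _ σ.injective] at this
    have hx0 : ∑ i, x i = 0 := by
      have himg : (Finset.univ : Finset (Fin (n+1))).image σ = Finset.univ := by
        simp
      rw [hsum_img Finset.univ, himg]
      have : ∑ j : Fin (n+1), f j = ∑ m ∈ Finset.range (n+1), (a * ((n : ℝ) - 2 * m)) := by
        rw [← Fin.sum_univ_eq_sum_range (fun m => a * ((n : ℝ) - 2 * (m : ℝ)))]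
      rw [this, sum_range_lin]
      unfold gf
      push_cast
      ring
    -- the flag of level sets of σ
    set Sk : ℕ → Finset (Fin (n+1)) :=
      fun k => Finset.univ.filter (fun i => (σ i : ℕ) < k) with hSk
    have hJ1 : ∀ k : ℕ, (Sk k).image σ
        = Finset.univ.filter (fun j : Fin (n+1) => (j : ℕ) < k) := by
      intro k
      ext j
      simp only [hSk, Finset.mem_image, Finset.mem_filter, Finset.mem_univ, true_and]
      constructor
      · rintro ⟨i, hi, rfl⟩; exact hi
      · intro hj; exact ⟨σ.symm j, by simpa using hj, σ.apply_symm_apply j⟩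
    have hJ2 : ∀ k : ℕ, k ≤ n + 1 →
        (Finset.univ.filter (fun j : Fin (n+1) => (j : ℕ) < k)).image Fin.val
          = Finset.range k := by
      intro k hk
      ext m
      simp only [Finset.mem_image, Finset.mem_filter, Finset.mem_univ, true_and,
        Finset.mem_range]
      constructor
      · rintro ⟨j, hj, rfl⟩; exact hj
      · intro hm; exact ⟨⟨m, by omega⟩, hm, rfl⟩
    have hSkcard : ∀ k : ℕ, k ≤ n + 1 → (Sk k).card = k := by
      intro k hk
      have h2 := congrArg Finset.card (hJ2 k hk)
      rw [Finset.card_image_of_injective _ Fin.val_injective, Finset.card_range] at h2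
      have h3 := congrArg Finset.card (hJ1 k)
      rw [Finset.card_image_of_injective _ σ.injective] at h3
      rw [h3, h2]
    have hSktight : ∀ k : ℕ, k ≤ n + 1 → ∑ i ∈ Sk k, x i = gf n a k := by
      intro k hk
      rw [hsum_img (Sk k), hJ1 k]
      have h4 : ∑ m ∈ (Finset.univ.filter (fun j : Fin (n+1) => (j : ℕ) < k)).image Fin.val,
            (a * ((n : ℝ) - 2 * m))
          = ∑ j ∈ Finset.univ.filter (fun j : Fin (n+1) => (j : ℕ) < k),
            (a * ((n : ℝ) - 2 * ((j : ℕ) : ℝ))) :=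
        Finset.sum_image (fun a _ b _ h => Fin.val_injective h)
      rw [hJ2 k hk] at h4
      rw [show ∑ j ∈ Finset.univ.filter (fun j : Fin (n+1) => (j : ℕ) < k), f j
          = ∑ j ∈ Finset.univ.filter (fun j : Fin (n+1) => (j : ℕ) < k),
            (a * ((n : ℝ) - 2 * ((j : ℕ) : ℝ))) from Finset.sum_congr rfl (fun j _ => by rw [hf]),
        ← h4, sum_range_lin]
    -- x determined by the flag sums
    have hdet : ∀ w : Fin (n+1) → ℝ,
        (∀ k : ℕ, k ≤ n + 1 → ∑ i ∈ Sk k, w i = gf n a k) → w = x := by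
      intro w hw
      funext i
      have hk_le : (σ i : ℕ) ≤ n := by have := (σ i).isLt; omega
      have hsub : Sk (σ i : ℕ) ⊆ Sk ((σ i : ℕ) + 1) := by
        intro j hj
        simp only [hSk, Finset.mem_filter, Finset.mem_univ, true_and] at hj ⊢
        omega
      have hdiffi : Sk ((σ i : ℕ) + 1) \ Sk (σ i : ℕ) = {i} := by
        ext j
        simp only [hSk, Finset.mem_sdiff, Finset.mem_filter, Finset.mem_univ, true_and,
          Finset.mem_singleton, not_lt]
        constructor
        · rintro ⟨h1, h2⟩
          have : (σ j : ℕ) = (σ i : ℕ) := by omega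
          exact σ.injective (Fin.ext this)
        · rintro rfl; omega
      have hval : ∀ v : Fin (n+1) → ℝ, (∀ k : ℕ, k ≤ n + 1 → ∑ i ∈ Sk k, v i = gf n a k) →
          v i = gf n a ((σ i : ℕ) + 1) - gf n a (σ i : ℕ) := by
        intro v hv
        have hsd : ∑ j ∈ Sk ((σ i : ℕ) + 1) \ Sk (σ i : ℕ), v j + ∑ j ∈ Sk (σ i : ℕ), v j
            = ∑ j ∈ Sk ((σ i : ℕ) + 1), v j := Finset.sum_sdiff hsub
        rw [hdiffi, Finset.sum_singleton] at hsd
        have h1 := hv (σ i : ℕ) (by omega)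
        have h2 := hv ((σ i : ℕ) + 1) (by omega)
        linarith
      have hxflag : ∀ k : ℕ, k ≤ n + 1 → ∑ i ∈ Sk k, x i = gf n a k := hSktight
      rw [hval w hw, ← hval x hxflag]
    -- extremality
    rw [mem_extremePoints]
    refine ⟨⟨hfeas, hx0⟩, ?_⟩
    intro y hy z hz hseg
    obtain ⟨t₁, t₂, ht₁, ht₂, hts, hxyz⟩ := hseg
    have hyz_flag : ∀ w : Fin (n+1) → ℝ,
        w ∈ basePoly (fun S : Finset (Fin (n + 1)) =>
          a * (S.card : ℝ) * ((n : ℝ) + 1 - (S.card : ℝ))) →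
        (∀ k : ℕ, k ≤ n + 1 → ∑ i ∈ Sk k, w i ≤ gf n a k) := by
      intro w hw k hk
      have h := hw.1 (Sk k)
      have h' : ∑ i ∈ Sk k, w i ≤ gf n a (Sk k).card := h
      rwa [hSkcard k hk] at h'
    have hy_le := hyz_flag y hy
    have hz_le := hyz_flag z hz
    have hcomb : ∀ k : ℕ, k ≤ n + 1 →
        t₁ * ∑ i ∈ Sk k, y i + t₂ * ∑ i ∈ Sk k, z i = gf n a k := by
      intro k hk
      have : ∑ i ∈ Sk k, (t₁ * y i + t₂ * z i) = ∑ i ∈ Sk k, x i := by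
        refine Finset.sum_congr rfl (fun i _ => ?_)
        have := congrFun hxyz i
        simpa [Pi.add_apply, Pi.smul_apply, smul_eq_mul] using this
      rw [Finset.sum_add_distrib, ← Finset.mul_sum, ← Finset.mul_sum] at this
      rw [this, hSktight k hk]
    have hy_eq : ∀ k : ℕ, k ≤ n + 1 → ∑ i ∈ Sk k, y i = gf n a k := by
      intro k hk
      by_contra hne
      have hlt : ∑ i ∈ Sk k, y i < gf n a k := lt_of_le_of_ne (hy_le k hk) hne
      have hgg : t₁ * gf n a k + t₂ * gf n a k = gf n a k := by
        rw [← add_mul, hts, one_mul]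
      nlinarith [hcomb k hk, hgg, mul_pos ht₁ (sub_pos.2 hlt),
        mul_nonneg ht₂.le (sub_nonneg.2 (hz_le k hk))]
    have hz_eq : ∀ k : ℕ, k ≤ n + 1 → ∑ i ∈ Sk k, z i = gf n a k := by
      intro k hk
      by_contra hne
      have hlt : ∑ i ∈ Sk k, z i < gf n a k := lt_of_le_of_ne (hz_le k hk) hne
      have hgg : t₁ * gf n a k + t₂ * gf n a k = gf n a k := by
        rw [← add_mul, hts, one_mul]
      nlinarith [hcomb k hk, hgg, mul_pos ht₂ (sub_pos.2 hlt),
        mul_nonneg ht₁.le (sub_nonneg.2 (hy_le k hk))]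
    exact ⟨hdet y hy_eq, hdet z hz_eq⟩
end

section
/- Let n ≥ 1, N = {0,1,...,n}, and let 𝔸_n = {e_i − e_j : i, j ∈ N, i ≠ j} ⊆ ℝ^N be the root system A_n. Then 𝔸_n is unimodular: if B ⊆ 𝔸_n is a linearly independent set and t ∈ 𝔸_n lies in the ℝ-linear span of B, then t is an integer linear combination of the vectors of B. -/
open Finset Pointwise

/-
The integer span `L` of a set of roots `B` partitions the coordinates into the classes of the
equivalence relation `e_i - e_k ∈ L`, and every root of `B` joins two coordinates of one class.
Hence the coordinate sum over the class `C` of `i` vanishes on `B`, so on its real span; applied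
to `e_i - e_j` it gives `1 - [j ∈ C] = 0`, i.e. `e_i - e_j ∈ L`.
-/

lemma sum_std_sub_std_apply {m : ℕ} (C : Finset (Fin m)) (p q : Fin m) :
    ∑ k ∈ C, (std p - std q) k = (if p ∈ C then 1 else 0) - (if q ∈ C then 1 else 0) := by
  simp [std, Finset.sum_sub_distrib]

lemma std_sub_std_mem_span_int_iff {m : ℕ} {B : Set (Fin m → ℝ)} (i : Fin m) {p q : Fin m}
    (hpq : std p - std q ∈ B) :
    std i - std p ∈ Submodule.span ℤ B ↔ std i - std q ∈ Submodule.span ℤ B := by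
  rw [show std i - std q = (std i - std p) + (std p - std q) by abel,
    Submodule.add_mem_iff_left _ (Submodule.subset_span hpq)]

theorem std_sub_std_mem_span_int_of_mem_span_real {m : ℕ} {B : Set (Fin m → ℝ)}
    (hB : ∀ b ∈ B, ∃ p q, b = std p - std q) {i j : Fin m}
    (h : std i - std j ∈ Submodule.span ℝ B) : std i - std j ∈ Submodule.span ℤ B := by
  classical
  set C := Finset.univ.filter fun k => std i - std k ∈ Submodule.span ℤ B
  let φ : (Fin m → ℝ) →ₗ[ℝ] ℝ := ∑ k ∈ C, LinearMap.proj k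
  have hφ : ∀ x, φ x = ∑ k ∈ C, x k := fun x => by simp [φ]
  have hBφ : Submodule.span ℝ B ≤ LinearMap.ker φ := by
    refine Submodule.span_le.2 fun b hb => ?_
    obtain ⟨p, q, rfl⟩ := hB b hb
    have hpq : p ∈ C ↔ q ∈ C := by simpa [C] using std_sub_std_mem_span_int_iff i hb
    rw [SetLike.mem_coe, LinearMap.mem_ker, hφ, sum_std_sub_std_apply, if_congr hpq rfl rfl,
      sub_self]
  have hi : i ∈ C := by simp [C]
  have hj : j ∈ C := by
    have h0 := LinearMap.mem_ker.1 (hBφ h)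
    rw [hφ, sum_std_sub_std_apply, if_pos hi] at h0
    by_contra hj
    rw [if_neg hj] at h0
    norm_num at h0
  simpa [C] using hj

theorem rootSystemA_unimodular_general (n : ℕ) (B : Set (Fin (n + 1) → ℝ))
    (hB : B ⊆ {v : Fin (n + 1) → ℝ | ∃ i j : Fin (n + 1), i ≠ j ∧ v = std i - std j})
    (t : Fin (n + 1) → ℝ)
    (ht : t ∈ {v : Fin (n + 1) → ℝ | ∃ i j : Fin (n + 1), i ≠ j ∧ v = std i - std j})
    (hspan : t ∈ Submodule.span ℝ B) :
    t ∈ Submodule.span ℤ B := by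
  obtain ⟨i, j, -, rfl⟩ := ht
  refine std_sub_std_mem_span_int_of_mem_span_real (fun b hb => ?_) hspan
  obtain ⟨p, q, -, hb⟩ := hB hb
  exact ⟨p, q, hb⟩

/-- The root system `𝔸_n = {e_i − e_j : i ≠ j}` is unimodular: every root
in the real span of a linearly independent subset `B ⊆ 𝔸_n` is an integer linear
combination of the vectors of `B`. -/
theorem rootSystemA_unimodular (n : ℕ) (hn : 1 ≤ n) (B : Set (Fin (n + 1) → ℝ))
    (hB : B ⊆ {v : Fin (n + 1) → ℝ | ∃ i j : Fin (n + 1), i ≠ j ∧ v = std i - std j})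
    (hind : LinearIndependent ℝ ((↑) : B → (Fin (n + 1) → ℝ)))
    (t : Fin (n + 1) → ℝ)
    (ht : t ∈ {v : Fin (n + 1) → ℝ | ∃ i j : Fin (n + 1), i ≠ j ∧ v = std i - std j})
    (hspan : t ∈ Submodule.span ℝ B) :
    t ∈ Submodule.span ℤ B :=
  rootSystemA_unimodular_general n B hB t ht hspan
end
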